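/- Let K := ‖V‖_{L∞(0,1)} + ‖Q‖_{L∞(0,1)} and b := √2·K. There exist C > 0 and a positive integer n₀, depending only on K, such that for all α, β ∈ [0,1], all integers n ≥ n₀, all z ∈ ℂ with |Re z − πn| ≤ π/2 and |Im z| ≤ b, and every continuous φ : [0,1] → ℂ satisfying both the Volterra integral equation φ(x) = cos(zx) + z⁻¹·∫₀ˣ (B(α,β)φ)(t)·sin(z(x−t)) dt for all x ∈ [0,1] and the characteristic equation −z·sin z + ∫₀¹ (B(α,β)φ)(t)·cos(z(1−t)) dt = 0, one has | z − πn − (−1)ⁿ·f₀(πn, α, β)/(πn) | ≤ C/n², where f₀(πn, α, β) := ∫₀¹ ( V(t)·Φ̃ₙ(t+α) + Q(t)·Φ̃ₙ(t−β) )·cos(πn(1−t)) dt and Φ̃ₙ is the extension by zero outside (0,1) of x ↦ cos(πnx). -/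

import Mathlib

open MeasureTheory Set

/-- Extension by zero outside `(0,1)`. -/
noncomputable def ext01 (u : ℝ → ℂ) : ℝ → ℂ := Set.indicator (Set.Ioo 0 1) u

/-- The nonlocal term `(B(α,β)u)(x) = V(x)·ũ(x+α) + Q(x)·ũ(x−β)`. -/
noncomputable def Bop (V Q : ℝ → ℂ) (α β : ℝ) (u : ℝ → ℂ) : ℝ → ℂ :=
  fun x => V x * ext01 u (x + α) + Q x * ext01 u (x - β)

/-- `K = ‖V‖_{L∞(0,1)} + ‖Q‖_{L∞(0,1)}`. -/
noncomputable def Knorm (V Q : ℝ → ℂ) : ℝ :=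
  (eLpNorm V ⊤ (volume.restrict (Set.Ioo (0:ℝ) 1))).toReal +
  (eLpNorm Q ⊤ (volume.restrict (Set.Ioo (0:ℝ) 1))).toReal

/-- `f₀(πn, α, β) = ∫₀¹ (V(t)Φ̃ₙ(t+α) + Q(t)Φ̃ₙ(t−β)) cos(πn(1−t)) dt`, where
`Φ̃ₙ` is the extension by zero of `x ↦ cos(πnx)`. -/
noncomputable def fZero (V Q : ℝ → ℂ) (α β : ℝ) (n : ℕ) : ℂ :=
  ∫ t in (0:ℝ)..1,
    (V t * ext01 (fun x => Complex.cos ((Real.pi * n * x : ℝ))) (t + α)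
      + Q t * ext01 (fun x => Complex.cos ((Real.pi * n * x : ℝ))) (t - β))
      * Complex.cos ((Real.pi * n * (1 - t) : ℝ))

set_option maxHeartbeats 1000000

/-- Port shim: the complex absolute value as an `AbsoluteValue` (equal to the norm). -/
noncomputable def Complex.abs : AbsoluteValue ℂ ℝ := NormedField.toAbsoluteValue ℂ

namespace Complex

theorem abs_apply (z : ℂ) : Complex.abs z = ‖z‖ := rfl

theorem norm_eq_abs (z : ℂ) : ‖z‖ = Complex.abs z := rfl

@[simp] theorem abs_exp (z : ℂ) : Complex.abs (Complex.exp z) = Real.exp z.re := Complex.norm_exp z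

@[simp] theorem abs_ofReal (r : ℝ) : Complex.abs (r : ℂ) = |r| := Complex.norm_real r

@[simp] theorem abs_natCast (n : ℕ) : Complex.abs (n : ℂ) = n := Complex.norm_natCast n

@[simp] theorem abs_two : Complex.abs 2 = 2 := by simp [abs_apply]

@[simp] theorem abs_I : Complex.abs Complex.I = 1 := by simp [abs_apply]

theorem sq_abs (z : ℂ) : Complex.abs z ^ 2 = Complex.normSq z := Complex.sq_norm z

theorem abs_re_le_abs (z : ℂ) : |z.re| ≤ Complex.abs z := Complex.abs_re_le_norm z

theorem continuous_abs : Continuous Complex.abs := continuous_norm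

end Complex

namespace Stmt19Aux
open Complex

lemma cosh_le_exp (x : ℝ) : (Real.exp x + Real.exp (-x)) / 2 ≤ Real.exp |x| := by
  have h1 : Real.exp x ≤ Real.exp |x| := Real.exp_le_exp.2 (le_abs_self x)
  have h2 : Real.exp (-x) ≤ Real.exp |x| := Real.exp_le_exp.2 (neg_le_abs x)
  linarith

lemma abs_sin_le (ζ : ℂ) : Complex.abs (Complex.sin ζ) ≤ Real.exp |ζ.im| := by
  have h1 : Complex.abs (Complex.exp (-ζ * I)) = Real.exp ζ.im := by
    rw [Complex.abs_exp]; congr 1; simp [Complex.mul_re]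
  have h2 : Complex.abs (Complex.exp (ζ * I)) = Real.exp (-ζ.im) := by
    rw [Complex.abs_exp]; congr 1; simp [Complex.mul_re]
  refine le_trans ?_ (cosh_le_exp ζ.im)
  rw [Complex.sin]
  calc Complex.abs ((Complex.exp (-ζ * I) - Complex.exp (ζ * I)) * I / 2)
      = Complex.abs (Complex.exp (-ζ * I) - Complex.exp (ζ * I)) / 2 := by
        simp [map_div₀, map_mul]
    _ ≤ (Real.exp ζ.im + Real.exp (-ζ.im)) / 2 := by
        rw [← h1, ← h2]
        have := norm_sub_le (Complex.exp (-ζ * I)) (Complex.exp (ζ * I))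
        simp only [Complex.norm_eq_abs] at this
        linarith

lemma abs_cos_le (ζ : ℂ) : Complex.abs (Complex.cos ζ) ≤ Real.exp |ζ.im| := by
  have h1 : Complex.abs (Complex.exp (-ζ * I)) = Real.exp ζ.im := by
    rw [Complex.abs_exp]; congr 1; simp [Complex.mul_re]
  have h2 : Complex.abs (Complex.exp (ζ * I)) = Real.exp (-ζ.im) := by
    rw [Complex.abs_exp]; congr 1; simp [Complex.mul_re]
  refine le_trans ?_ (cosh_le_exp ζ.im)
  rw [Complex.cos]
  calc Complex.abs ((Complex.exp (ζ * I) + Complex.exp (-ζ * I)) / 2)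
      = Complex.abs (Complex.exp (ζ * I) + Complex.exp (-ζ * I)) / 2 := by
        simp [map_div₀]
    _ ≤ (Real.exp ζ.im + Real.exp (-ζ.im)) / 2 := by
        rw [← h1, ← h2]
        have := norm_add_le (Complex.exp (ζ * I)) (Complex.exp (-ζ * I))
        simp only [Complex.norm_eq_abs] at this
        linarith

lemma sin_eq_int (ζ : ℂ) : Complex.sin ζ = ζ * ∫ s in (0:ℝ)..1, Complex.cos (ζ * s) := by
  have h : ∀ s ∈ Set.uIcc (0:ℝ) 1, HasDerivAt (fun s : ℝ => Complex.sin (ζ * s))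
      (ζ * Complex.cos (ζ * s)) s := by
    intro s _
    have h1 : HasDerivAt (fun u : ℂ => Complex.sin (ζ * u)) (Complex.cos (ζ * s) * ζ) (s : ℂ) := by
      have h0 := (Complex.hasDerivAt_sin (ζ * (s:ℂ))).comp (s:ℂ)
        ((hasDerivAt_id (s:ℂ)).const_mul ζ)
      simp only [mul_one] at h0
      exact h0
    simpa [mul_comm] using h1.comp_ofReal
  have hint : IntervalIntegrable (fun s : ℝ => ζ * Complex.cos (ζ * s)) volume 0 1 :=
    (Continuous.intervalIntegrable (by continuity) 0 1)
  have := intervalIntegral.integral_eq_sub_of_hasDerivAt h hint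
  rw [intervalIntegral.integral_const_mul] at this
  simpa using this.symm

lemma abs_sin_le' (ζ : ℂ) : Complex.abs (Complex.sin ζ) ≤ Complex.abs ζ * Real.exp |ζ.im| := by
  rw [sin_eq_int ζ, map_mul]
  refine mul_le_mul_of_nonneg_left ?_ (Complex.abs.nonneg ζ)
  have h : ∀ s ∈ Set.uIoc (0:ℝ) 1, ‖Complex.cos (ζ * s)‖ ≤ Real.exp |ζ.im| := by
    intro s hs
    rw [Set.uIoc_of_le zero_le_one] at hs
    have him : |(ζ * (s:ℂ)).im| ≤ |ζ.im| := by
      have : (ζ * (s:ℂ)).im = ζ.im * s := by simp [Complex.mul_im]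
      rw [this, abs_mul, _root_.abs_of_nonneg hs.1.le]
      nlinarith [abs_nonneg ζ.im, hs.2, hs.1.le]
    calc ‖Complex.cos (ζ * s)‖ ≤ Real.exp |(ζ * (s:ℂ)).im| := abs_cos_le _
      _ ≤ Real.exp |ζ.im| := Real.exp_le_exp.2 him
  have := intervalIntegral.norm_integral_le_of_norm_le_const (C := Real.exp |ζ.im|) h
  simp only [sub_zero, abs_one, mul_one] at this
  exact this

lemma abs_cos_sub_cos (a b : ℂ) {B : ℝ} (ha : |a.im| ≤ B) (hb : |b.im| ≤ B) :
    Complex.abs (Complex.cos a - Complex.cos b) ≤ Complex.abs (a - b) * Real.exp (2 * B) := by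
  have hB : 0 ≤ B := le_trans (abs_nonneg _) ha
  rw [Complex.cos_sub_cos, map_mul, map_mul]
  have h1 : Complex.abs (Complex.sin ((a + b) / 2)) ≤ Real.exp B := by
    refine le_trans (abs_sin_le _) (Real.exp_le_exp.2 ?_)
    have h : ((a + b) / 2).im = (a.im + b.im) / 2 := by simp [Complex.div_im]
    rw [h]
    calc |(a.im + b.im) / 2| ≤ (|a.im| + |b.im|) / 2 := by
          rw [abs_div]; simp only [Nat.abs_ofNat]
          exact div_le_div_of_nonneg_right (abs_add_le _ _) (by norm_num)
      _ ≤ B := by linarith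
  have h2 : Complex.abs (Complex.sin ((a - b) / 2)) ≤ Complex.abs (a - b) / 2 * Real.exp B := by
    refine le_trans (abs_sin_le' _) ?_
    have he : ((a - b) / 2).im = (a.im - b.im) / 2 := by simp [Complex.div_im]
    have habs : Complex.abs ((a - b) / 2) = Complex.abs (a - b) / 2 := by
      simp [map_div₀]
    rw [habs, he]
    refine mul_le_mul_of_nonneg_left (Real.exp_le_exp.2 ?_) (by positivity)
    calc |(a.im - b.im) / 2| ≤ (|a.im| + |b.im|) / 2 := by
          rw [abs_div]; simp only [Nat.abs_ofNat]
          exact div_le_div_of_nonneg_right (abs_sub _ _) (by norm_num)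
      _ ≤ B := by linarith
  calc Complex.abs (-2) * Complex.abs (Complex.sin ((a + b) / 2)) *
        Complex.abs (Complex.sin ((a - b) / 2))
      ≤ 2 * Real.exp B * (Complex.abs (a - b) / 2 * Real.exp B) := by
        have h : Complex.abs (-2) = 2 := by norm_num
        rw [h]
        refine mul_le_mul (by nlinarith [h1, Real.exp_pos B]) h2 (Complex.abs.nonneg _) (by positivity)
    _ = Complex.abs (a - b) * (Real.exp B * Real.exp B) := by ring
    _ = Complex.abs (a - b) * Real.exp (2 * B) := by rw [← Real.exp_add]; ring_nf

lemma abs_cos_sub_one (u : ℂ) :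
    Complex.abs (Complex.cos u - 1) ≤ Complex.abs u ^ 2 * Real.exp |u.im| := by
  have h := Complex.cos_sub_cos u 0
  simp only [Complex.cos_zero, add_zero, sub_zero] at h
  rw [h, map_mul, map_mul]
  have he : |(u / 2).im| = |u.im| / 2 := by
    have h2 : (u / 2).im = u.im / 2 := by simp [Complex.div_im]
    rw [h2, abs_div]; simp
  have h2 : Complex.abs (Complex.sin (u / 2)) ≤ Complex.abs u / 2 * Real.exp (|u.im| / 2) := by
    refine le_trans (abs_sin_le' _) ?_
    have habs : Complex.abs (u / 2) = Complex.abs u / 2 := by simp [map_div₀]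
    rw [habs, he]
  have habs2 : Complex.abs (-2) = 2 := by norm_num
  rw [habs2]
  have hee : Real.exp (|u.im| / 2) * Real.exp (|u.im| / 2) = Real.exp |u.im| := by
    rw [← Real.exp_add]; ring_nf
  calc 2 * Complex.abs (Complex.sin (u / 2)) * Complex.abs (Complex.sin (u / 2))
      ≤ 2 * (Complex.abs u / 2 * Real.exp (|u.im| / 2)) *
          (Complex.abs u / 2 * Real.exp (|u.im| / 2)) := by
        have h0 := Complex.abs.nonneg (Complex.sin (u / 2))
        nlinarith [h2, Real.exp_pos (|u.im| / 2), Complex.abs.nonneg u]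
    _ = Complex.abs u ^ 2 * (Real.exp (|u.im| / 2) * Real.exp (|u.im| / 2)) / 2 := by ring
    _ = Complex.abs u ^ 2 * Real.exp |u.im| / 2 := by rw [hee]
    _ ≤ Complex.abs u ^ 2 * Real.exp |u.im| := by
        nlinarith [sq_nonneg (Complex.abs u), Real.exp_pos |u.im|,
          mul_nonneg (sq_nonneg (Complex.abs u)) (Real.exp_pos |u.im|).le]

lemma abs_sin_sub_self (ζ : ℂ) :
    Complex.abs (Complex.sin ζ - ζ) ≤ Complex.abs ζ ^ 3 * Real.exp |ζ.im| := by
  have hrep : Complex.sin ζ - ζ = ζ * ∫ s in (0:ℝ)..1, (Complex.cos (ζ * s) - 1) := by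
    rw [intervalIntegral.integral_sub (Continuous.intervalIntegrable (by continuity) 0 1)
      (intervalIntegrable_const)]
    simp [sin_eq_int ζ]
    ring
  rw [hrep, map_mul]
  have h : ∀ s ∈ Set.uIoc (0:ℝ) 1, ‖Complex.cos (ζ * s) - 1‖ ≤ Complex.abs ζ ^ 2 * Real.exp |ζ.im| := by
    intro s hs
    rw [Set.uIoc_of_le zero_le_one] at hs
    have him : |(ζ * (s:ℂ)).im| ≤ |ζ.im| := by
      have h0 : (ζ * (s:ℂ)).im = ζ.im * s := by simp [Complex.mul_im]
      rw [h0, abs_mul, _root_.abs_of_nonneg hs.1.le]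
      nlinarith [abs_nonneg ζ.im, hs.2, hs.1.le]
    have habs : Complex.abs (ζ * (s:ℂ)) ≤ Complex.abs ζ := by
      rw [map_mul]
      have : Complex.abs ((s:ℂ)) ≤ 1 := by
        rw [Complex.abs_ofReal, _root_.abs_of_nonneg hs.1.le]; exact hs.2
      nlinarith [Complex.abs.nonneg ζ, Complex.abs.nonneg ((s:ℂ))]
    calc ‖Complex.cos (ζ * s) - 1‖ ≤ Complex.abs (ζ * (s:ℂ)) ^ 2 * Real.exp |(ζ * (s:ℂ)).im| :=
          abs_cos_sub_one _
      _ ≤ Complex.abs ζ ^ 2 * Real.exp |ζ.im| := by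
          refine mul_le_mul (by nlinarith [Complex.abs.nonneg (ζ * (s:ℂ))])
            (Real.exp_le_exp.2 him) (Real.exp_pos _).le (by positivity)
  have := intervalIntegral.norm_integral_le_of_norm_le_const
    (C := Complex.abs ζ ^ 2 * Real.exp |ζ.im|) h
  simp only [sub_zero, mul_one, abs_one] at this
  calc Complex.abs ζ * Complex.abs (∫ s in (0:ℝ)..1, (Complex.cos (ζ * s) - 1))
      ≤ Complex.abs ζ * (Complex.abs ζ ^ 2 * Real.exp |ζ.im|) := by
        refine mul_le_mul_of_nonneg_left ?_ (Complex.abs.nonneg ζ)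
        exact this
    _ = Complex.abs ζ ^ 3 * Real.exp |ζ.im| := by ring

lemma sin_lower (w : ℂ) (h : |w.re| ≤ Real.pi / 2) :
    2 / Real.pi * Complex.abs w ≤ Complex.abs (Complex.sin w) := by
  have hπ := Real.pi_pos
  have hs : Complex.abs (Complex.sin w) ^ 2 = Real.sin w.re ^ 2 + Real.sinh w.im ^ 2 := by
    rw [Complex.sin_eq]
    rw [← Complex.ofReal_sin, ← Complex.ofReal_cosh, ← Complex.ofReal_cos, ← Complex.ofReal_sinh]
    rw [← Complex.ofReal_mul, ← Complex.ofReal_mul]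
    rw [Complex.sq_abs, Complex.normSq_add_mul_I]
    have := Real.cosh_sq w.im
    have := Real.sin_sq_add_cos_sq w.re
    nlinarith
  have hw : Complex.abs w ^ 2 = w.re ^ 2 + w.im ^ 2 := by
    rw [Complex.sq_abs, Complex.normSq_apply]; ring
  have hj : 2 / Real.pi * |w.re| ≤ |Real.sin w.re| := Real.mul_abs_le_abs_sin h
  have hsh : |w.im| ≤ |Real.sinh w.im| := by
    rw [Real.abs_sinh]
    exact Real.self_le_sinh_iff.2 (abs_nonneg _)
  have hle : 2 / Real.pi ≤ 1 := by
    rw [div_le_one hπ]; linarith [Real.pi_gt_three]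
  have hsq : (2 / Real.pi * Complex.abs w) ^ 2 ≤ Complex.abs (Complex.sin w) ^ 2 := by
    rw [hs]
    have h1 : (2 / Real.pi) ^ 2 * w.re ^ 2 ≤ Real.sin w.re ^ 2 := by
      have h' := mul_self_le_mul_self
        (mul_nonneg (by positivity) (abs_nonneg w.re)) hj
      calc (2 / Real.pi) ^ 2 * w.re ^ 2
          = (2 / Real.pi * |w.re|) * (2 / Real.pi * |w.re|) := by
            rw [← _root_.sq_abs w.re]; ring
        _ ≤ |Real.sin w.re| * |Real.sin w.re| := h'
        _ = Real.sin w.re ^ 2 := by rw [← _root_.sq_abs (Real.sin w.re)]; ring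
    have h2 : (2 / Real.pi) ^ 2 * w.im ^ 2 ≤ Real.sinh w.im ^ 2 := by
      have h2a : w.im ^ 2 ≤ Real.sinh w.im ^ 2 := by
        have h' := mul_self_le_mul_self (abs_nonneg w.im) hsh
        calc w.im ^ 2 = |w.im| * |w.im| := by rw [← _root_.sq_abs w.im]; ring
          _ ≤ |Real.sinh w.im| * |Real.sinh w.im| := h'
          _ = Real.sinh w.im ^ 2 := by rw [← _root_.sq_abs (Real.sinh w.im)]; ring
      have hle2 : (2 / Real.pi) ^ 2 ≤ 1 := by
        nlinarith [div_pos (by norm_num : (0:ℝ) < 2) hπ]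
      nlinarith [sq_nonneg w.im]
    calc (2 / Real.pi * Complex.abs w) ^ 2 = (2 / Real.pi) ^ 2 * (w.re ^ 2 + w.im ^ 2) := by
          rw [mul_pow, hw]
      _ ≤ Real.sin w.re ^ 2 + Real.sinh w.im ^ 2 := by nlinarith
  nlinarith [Complex.abs.nonneg (Complex.sin w), Complex.abs.nonneg w,
    mul_nonneg (div_pos (by norm_num : (0:ℝ) < 2) hπ).le (Complex.abs.nonneg w), hsq]

lemma cos_pi_nat (n : ℕ) : Complex.cos ((Real.pi : ℂ) * n) = (-1) ^ n := by
  have h : ((Real.pi : ℂ) * n) = ((Real.pi * n : ℝ) : ℂ) := by push_cast; ring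
  rw [h, ← Complex.ofReal_cos]
  have : Real.cos (Real.pi * n) = (-1) ^ n := by
    have := Real.cos_nat_mul_pi_sub 0 n
    simpa [mul_comm] using this
  rw [this]
  push_cast
  ring

lemma sin_pi_nat (n : ℕ) : Complex.sin ((Real.pi : ℂ) * n) = 0 := by
  rw [mul_comm]
  exact_mod_cast Complex.sin_nat_mul_pi n

lemma sin_shift (n : ℕ) (w : ℂ) :
    Complex.sin ((Real.pi : ℂ) * n + w) = (-1) ^ n * Complex.sin w := by
  rw [Complex.sin_add, cos_pi_nat, sin_pi_nat]
  ring

end Stmt19Aux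

open Stmt19Aux

/-- First-order truncation of the convergent series representation of the
characteristic roots: `z = πn + (−1)ⁿ f₀(πn,α,β)/(πn) + O(1/n²)`, uniformly in
`α, β`, with constants depending only on `K`. -/
theorem stmt_19 (K : ℝ) (hK : 0 ≤ K) :
    ∃ C : ℝ, 0 < C ∧ ∃ n₀ : ℕ, 0 < n₀ ∧
      ∀ V Q : ℝ → ℂ, Measurable V → Measurable Q →
        eLpNorm V ⊤ (volume.restrict (Set.Ioo (0:ℝ) 1)) ≠ ⊤ →
        eLpNorm Q ⊤ (volume.restrict (Set.Ioo (0:ℝ) 1)) ≠ ⊤ →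
        Knorm V Q = K →
        ∀ α β : ℝ, α ∈ Set.Icc (0:ℝ) 1 → β ∈ Set.Icc (0:ℝ) 1 →
        ∀ n : ℕ, n₀ ≤ n →
        ∀ z : ℂ, |z.re - Real.pi * n| ≤ Real.pi / 2 →
          |z.im| ≤ Real.sqrt 2 * K →
        ∀ φ : ℝ → ℂ, ContinuousOn φ (Set.Icc (0:ℝ) 1) →
          (∀ x ∈ Set.Icc (0:ℝ) 1,
            φ x = Complex.cos (z * ↑x)
              + z⁻¹ * ∫ t in (0:ℝ)..x, Bop V Q α β φ t * Complex.sin (z * (↑x - ↑t))) →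
          (-z * Complex.sin z
            + ∫ t in (0:ℝ)..1, Bop V Q α β φ t * Complex.cos (z * (1 - ↑t)) = 0) →
          ‖z - (Real.pi : ℂ) * n
              - (-1 : ℂ) ^ n * fZero V Q α β n / ((Real.pi : ℂ) * n)‖
            ≤ C / n ^ 2 := by
  -- Constants
  set b : ℝ := Real.sqrt 2 * K with hb_def
  have hb0 : 0 ≤ b := mul_nonneg (Real.sqrt_nonneg 2) hK
  set E : ℝ := Real.exp (2 * (b + 1)) with hE_def
  have hE0 : 0 < E := Real.exp_pos _
  have hE1 : 1 ≤ E := by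
    rw [hE_def]; nlinarith [Real.add_one_le_exp (2 * (b + 1))]
  set D : ℝ := 2 * K * E ^ 2 + 1 with hD_def
  have hKE2 : 0 ≤ 2 * K * E ^ 2 :=
    mul_nonneg (mul_nonneg (by norm_num) hK) (sq_nonneg E)
  have hD0 : 0 < D := by rw [hD_def]; linarith
  set W : ℝ := 2 * D with hW_def
  have hW0 : 0 < W := by nlinarith
  set C₁ : ℝ := W * E + D with hC₁_def
  have hC₁0 : 0 < C₁ := by nlinarith
  set C₂ : ℝ := K * C₁ * E + K * W * E with hC₂_def
  have hC₂0 : 0 ≤ C₂ := by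
    rw [hC₂_def]
    have := mul_nonneg (mul_nonneg hK hC₁0.le) hE0.le
    have := mul_nonneg (mul_nonneg hK hW0.le) hE0.le
    linarith
  set C : ℝ := W ^ 2 * E + D * W + C₂ + 1 with hC_def
  have hC0 : 0 < C := by
    rw [hC_def]
    have := mul_nonneg (sq_nonneg W) hE0.le
    have := mul_nonneg hD0.le hW0.le
    linarith
  refine ⟨C, hC0, ⌈4 * K * E ^ 2 + W⌉₊ + 1, Nat.succ_pos _, ?_⟩
  intro V Q hVmeas hQmeas hVtop hQtop hKnorm α β hα hβ n hn z hzre hzim φ hφcont hVolt hchar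
  classical
  -- basic numeric facts
  have hπ0 : (0:ℝ) < Real.pi := Real.pi_pos
  have hπ3 : (3:ℝ) < Real.pi := Real.pi_gt_three
  have hπ4 : Real.pi ≤ 4 := Real.pi_le_four
  have hn1 : 1 ≤ n := le_trans (Nat.succ_le_succ (Nat.zero_le _)) hn
  have hn1' : (1:ℝ) ≤ (n:ℝ) := by exact_mod_cast hn1
  have hν : (0:ℝ) < (n:ℝ) := by linarith
  have hnK : 4 * K * E ^ 2 + W ≤ (n:ℝ) := by
    have h1 : (4 * K * E ^ 2 + W : ℝ) ≤ (⌈4 * K * E ^ 2 + W⌉₊ : ℝ) := Nat.le_ceil _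
    have h2 : ((⌈4 * K * E ^ 2 + W⌉₊ + 1 : ℕ) : ℝ) ≤ (n:ℝ) := by exact_mod_cast hn
    push_cast at h2
    linarith
  have hKE2' : 0 ≤ 4 * K * E ^ 2 :=
    mul_nonneg (mul_nonneg (by norm_num) hK) (sq_nonneg E)
  have hWn : W ≤ (n:ℝ) := by linarith
  -- L∞ norms
  set KV : ℝ := (eLpNorm V ⊤ (volume.restrict (Set.Ioo (0:ℝ) 1))).toReal with hKV_def
  set KQ : ℝ := (eLpNorm Q ⊤ (volume.restrict (Set.Ioo (0:ℝ) 1))).toReal with hKQ_def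
  have hKVQ : KV + KQ = K := hKnorm
  have hKV0 : 0 ≤ KV := ENNReal.toReal_nonneg
  have hKQ0 : 0 ≤ KQ := ENNReal.toReal_nonneg
  have hVae : ∀ᵐ t ∂(volume : Measure ℝ), t ∈ Set.Ioo (0:ℝ) 1 → Complex.abs (V t) ≤ KV := by
    rw [← ae_restrict_iff' measurableSet_Ioo]
    filter_upwards [ae_le_eLpNormEssSup (f := V) (μ := volume.restrict (Set.Ioo (0:ℝ) 1))]
      with t ht
    have htop : eLpNormEssSup V (volume.restrict (Set.Ioo (0:ℝ) 1)) ≠ ⊤ := by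
      rwa [← eLpNorm_exponent_top]
    have h1 := ENNReal.toReal_mono htop ht
    rw [toReal_enorm] at h1
    simpa [hKV_def, eLpNorm_exponent_top, Complex.norm_eq_abs] using h1
  have hQae : ∀ᵐ t ∂(volume : Measure ℝ), t ∈ Set.Ioo (0:ℝ) 1 → Complex.abs (Q t) ≤ KQ := by
    rw [← ae_restrict_iff' measurableSet_Ioo]
    filter_upwards [ae_le_eLpNormEssSup (f := Q) (μ := volume.restrict (Set.Ioo (0:ℝ) 1))]
      with t ht
    have htop : eLpNormEssSup Q (volume.restrict (Set.Ioo (0:ℝ) 1)) ≠ ⊤ := by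
      rwa [← eLpNorm_exponent_top]
    have h1 := ENNReal.toReal_mono htop ht
    rw [toReal_enorm] at h1
    simpa [hKQ_def, eLpNorm_exponent_top, Complex.norm_eq_abs] using h1
  -- trig bounds for arguments z * r, |r| ≤ 1
  have hsinE : ∀ r : ℝ, |r| ≤ 1 → Complex.abs (Complex.sin (z * (r:ℂ))) ≤ E := by
    intro r hr
    refine le_trans (abs_sin_le _) ?_
    rw [hE_def]
    apply Real.exp_le_exp.2
    have him : (z * (r:ℂ)).im = z.im * r := by simp [Complex.mul_im]
    rw [him]
    calc |z.im * r| = |z.im| * |r| := abs_mul _ _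
      _ ≤ b * 1 := mul_le_mul hzim hr (abs_nonneg _) hb0
      _ ≤ 2 * (b + 1) := by linarith
  have hcosE : ∀ r : ℝ, |r| ≤ 1 → Complex.abs (Complex.cos (z * (r:ℂ))) ≤ E := by
    intro r hr
    refine le_trans (abs_cos_le _) ?_
    rw [hE_def]
    apply Real.exp_le_exp.2
    have him : (z * (r:ℂ)).im = z.im * r := by simp [Complex.mul_im]
    rw [him]
    calc |z.im * r| = |z.im| * |r| := abs_mul _ _
      _ ≤ b * 1 := mul_le_mul hzim hr (abs_nonneg _) hb0
      _ ≤ 2 * (b + 1) := by linarith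
  -- lower bound on |z|
  have hzre_bounds := abs_le.1 hzre
  have hzabs : (n:ℝ) ≤ Complex.abs z := by
    have h1 : (n:ℝ) ≤ z.re := by nlinarith [hzre_bounds.1]
    exact le_trans h1 (le_trans (le_abs_self _) (Complex.abs_re_le_abs z))
  have hzpos : (0:ℝ) < Complex.abs z := lt_of_lt_of_le hν hzabs
  have hz0 : z ≠ 0 := by
    intro h; rw [h] at hzpos; simp at hzpos
  -- Bop bounds
  have hext_bound : ∀ (u : ℝ → ℂ) (M : ℝ), 0 ≤ M →
      (∀ x ∈ Set.Ioo (0:ℝ) 1, Complex.abs (u x) ≤ M) →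
      ∀ y : ℝ, Complex.abs (ext01 u y) ≤ M := by
    intro u M hM hu y
    by_cases h : y ∈ Set.Ioo (0:ℝ) 1
    · rw [ext01, Set.indicator_of_mem h]; exact hu y h
    · rw [ext01, Set.indicator_of_notMem h]; simpa using hM
  have hBop_ae : ∀ (u : ℝ → ℂ) (M : ℝ), 0 ≤ M →
      (∀ x ∈ Set.Ioo (0:ℝ) 1, Complex.abs (u x) ≤ M) →
      ∀ᵐ t ∂(volume : Measure ℝ), t ∈ Set.Ioo (0:ℝ) 1 →
        Complex.abs (Bop V Q α β u t) ≤ K * M := by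
    intro u M hM hu
    filter_upwards [hVae, hQae] with t htV htQ ht
    have h1 : Complex.abs (Bop V Q α β u t) ≤
        Complex.abs (V t) * Complex.abs (ext01 u (t + α)) +
        Complex.abs (Q t) * Complex.abs (ext01 u (t - β)) := by
      simpa [Bop, map_mul] using
        Complex.abs.add_le (V t * ext01 u (t + α)) (Q t * ext01 u (t - β))
    calc Complex.abs (Bop V Q α β u t) ≤ _ := h1
      _ ≤ KV * M + KQ * M :=
        add_le_add (mul_le_mul (htV ht) (hext_bound u M hM hu _) (Complex.abs.nonneg _) hKV0)
          (mul_le_mul (htQ ht) (hext_bound u M hM hu _) (Complex.abs.nonneg _) hKQ0)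
      _ = K * M := by rw [← hKVQ]; ring
  have hne1 : ∀ᵐ t : ℝ ∂volume, t ≠ (1:ℝ) := by
    rw [ae_iff]
    simp only [not_not]
    simpa using Real.volume_singleton (x := (1:ℝ))
  -- generic interval-integral bound
  have int_bound : ∀ (f : ℝ → ℂ) (c : ℝ) (x : ℝ), 0 ≤ c → x ∈ Set.Icc (0:ℝ) 1 →
      (∀ᵐ t ∂(volume : Measure ℝ), t ∈ Set.Ioo (0:ℝ) 1 → Complex.abs (f t) ≤ c) →
      Complex.abs (∫ t in (0:ℝ)..x, f t) ≤ c * x := by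
    intro f c x hc hx hf
    have h1 : ∀ᵐ t ∂(volume.restrict (Set.uIoc (0:ℝ) x)), ‖f t‖ ≤ c := by
      rw [Set.uIoc_of_le hx.1]
      filter_upwards [ae_restrict_mem measurableSet_Ioc, ae_restrict_of_ae hf,
        ae_restrict_of_ae hne1] with t ht h2 h3
      have htmem : t ∈ Set.Ioo (0:ℝ) 1 := ⟨ht.1, lt_of_le_of_ne (le_trans ht.2 hx.2) h3⟩
      simpa [Complex.norm_eq_abs] using h2 htmem
    have h2 : ‖∫ t in (0:ℝ)..x, f t‖ ≤ |x * c| := by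
      have h3 := intervalIntegral.norm_integral_le_of_norm_le_const_ae
        ((ae_restrict_iff' measurableSet_uIoc).1 h1)
      calc ‖∫ t in (0:ℝ)..x, f t‖ ≤ c * |x - 0| := h3
        _ = |x * c| := by rw [sub_zero, abs_mul, abs_of_nonneg hc, mul_comm]
    calc Complex.abs (∫ t in (0:ℝ)..x, f t) = ‖∫ t in (0:ℝ)..x, f t‖ :=
          (Complex.norm_eq_abs _).symm
      _ ≤ |x * c| := h2
      _ = c * x := by rw [abs_of_nonneg (mul_nonneg hx.1 hc)]; ring
  -- Step A : uniform bound on φ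
  obtain ⟨x₀, hx₀mem, hx₀max⟩ :=
    isCompact_Icc.exists_isMaxOn (Set.nonempty_Icc.2 zero_le_one)
      (Complex.continuous_abs.comp_continuousOn hφcont)
  set M : ℝ := Complex.abs (φ x₀) with hM_def
  have hφM : ∀ x ∈ Set.Icc (0:ℝ) 1, Complex.abs (φ x) ≤ M := fun x hx => hx₀max hx
  have hM0 : 0 ≤ M := Complex.abs.nonneg _
  have hφM' : ∀ x ∈ Set.Ioo (0:ℝ) 1, Complex.abs (φ x) ≤ M :=
    fun x hx => hφM x (Set.Ioo_subset_Icc_self hx)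
  have hKME : 0 ≤ K * M * E := mul_nonneg (mul_nonneg hK hM0) hE0.le
  have hVoltInt : ∀ x ∈ Set.Icc (0:ℝ) 1,
      Complex.abs (∫ t in (0:ℝ)..x, Bop V Q α β φ t * Complex.sin (z * ((x:ℂ) - (t:ℂ))))
        ≤ K * M * E := by
    intro x hx
    have hae : ∀ᵐ t ∂(volume : Measure ℝ), t ∈ Set.Ioo (0:ℝ) 1 →
        Complex.abs (Bop V Q α β φ t * Complex.sin (z * ((x:ℂ) - (t:ℂ)))) ≤ K * M * E := by
      filter_upwards [hBop_ae φ M hM0 hφM'] with t hB ht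
      rw [map_mul]
      have hcast : ((x:ℂ) - (t:ℂ)) = ((x - t : ℝ) : ℂ) := by push_cast; ring
      have hsin : Complex.abs (Complex.sin (z * ((x:ℂ) - (t:ℂ)))) ≤ E := by
        rw [hcast]
        exact hsinE (x - t) (by rw [abs_le]; constructor <;> linarith [ht.1, ht.2, hx.1, hx.2])
      exact mul_le_mul (hB ht) hsin (Complex.abs.nonneg _) (mul_nonneg hK hM0)
    have h := int_bound _ (K * M * E) x hKME hx hae
    calc Complex.abs (∫ t in (0:ℝ)..x, Bop V Q α β φ t * Complex.sin (z * ((x:ℂ) - (t:ℂ))))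
        ≤ K * M * E * x := h
      _ ≤ K * M * E := by nlinarith [hx.1, hx.2, hKME]
  have hKEn : K * E ≤ (n:ℝ) / 2 := by
    have hprod : 0 ≤ K * (E - 1) * E := mul_nonneg (mul_nonneg hK (sub_nonneg.2 hE1)) hE0.le
    have hring : K * (E - 1) * E = K * E ^ 2 - K * E := by ring
    linarith
  have hM2 : M ≤ 2 * E := by
    have hv := hVolt x₀ hx₀mem
    have h1 : M ≤ E + (Complex.abs z)⁻¹ * (K * M * E) := by
      conv_lhs => rw [hM_def, hv]
      refine le_trans (Complex.abs.add_le _ _) (add_le_add ?_ ?_)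
      · exact hcosE x₀ (by rw [abs_le]; constructor <;> linarith [hx₀mem.1, hx₀mem.2])
      · rw [map_mul, map_inv₀]
        exact mul_le_mul_of_nonneg_left (hVoltInt x₀ hx₀mem) (inv_nonneg.2 (Complex.abs.nonneg z))
    have h3 : (Complex.abs z)⁻¹ * (K * M * E) ≤ M / 2 := by
      rw [inv_mul_le_iff₀ hzpos]
      have hp1 : 0 ≤ M * ((n:ℝ) / 2 - K * E) := mul_nonneg hM0 (sub_nonneg.2 hKEn)
      have hp2 : 0 ≤ M * (Complex.abs z - (n:ℝ)) := mul_nonneg hM0 (sub_nonneg.2 hzabs)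
      have hr1 : M * ((n:ℝ) / 2 - K * E) = M * (n:ℝ) / 2 - K * M * E := by ring
      have hr2 : M * (Complex.abs z - (n:ℝ)) = M * Complex.abs z - M * (n:ℝ) := by ring
      have hgoal : K * M * E ≤ M / 2 * Complex.abs z := by linarith
      linarith [hgoal]
    linarith
  -- characteristic equation
  set Iv : ℂ := ∫ t in (0:ℝ)..1, Bop V Q α β φ t * Complex.cos (z * (1 - (t:ℂ))) with hIv_def
  have hzsin : z * Complex.sin z = Iv := by linear_combination (-1 : ℂ) * hchar
  have hIvB : Complex.abs Iv ≤ K * M * E := by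
    rw [hIv_def]
    have hae : ∀ᵐ t ∂(volume : Measure ℝ), t ∈ Set.Ioo (0:ℝ) 1 →
        Complex.abs (Bop V Q α β φ t * Complex.cos (z * (1 - (t:ℂ)))) ≤ K * M * E := by
      filter_upwards [hBop_ae φ M hM0 hφM'] with t hB ht
      rw [map_mul]
      have hcast : (1 - (t:ℂ)) = ((1 - t : ℝ) : ℂ) := by push_cast; ring
      have hcos : Complex.abs (Complex.cos (z * (1 - (t:ℂ)))) ≤ E := by
        rw [hcast]
        exact hcosE (1 - t) (by rw [abs_le]; constructor <;> linarith [ht.1, ht.2])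
      exact mul_le_mul (hB ht) hcos (Complex.abs.nonneg _) (mul_nonneg hK hM0)
    have h := int_bound _ (K * M * E) 1 hKME (Set.mem_Icc.2 ⟨zero_le_one, le_refl 1⟩) hae
    simpa using h
  have hIvD : Complex.abs Iv ≤ D := by
    have hprod : 0 ≤ K * E * (2 * E - M) :=
      mul_nonneg (mul_nonneg hK hE0.le) (sub_nonneg.2 hM2)
    have hring : K * E * (2 * E - M) = 2 * K * E ^ 2 - K * M * E := by ring
    rw [hD_def]; linarith
  -- w = z - πn
  set P : ℂ := (Real.pi : ℂ) * n with hP_def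
  have hP0 : P ≠ 0 := by
    rw [hP_def]
    exact mul_ne_zero (by exact_mod_cast Real.pi_ne_zero) (Nat.cast_ne_zero.2 (by omega))
  have hPabs : Complex.abs P = Real.pi * n := by
    rw [hP_def, map_mul, Complex.abs_ofReal, Complex.abs_natCast, abs_of_pos hπ0]
  have hPn : (n:ℝ) ≤ Complex.abs P := by rw [hPabs]; nlinarith
  set w : ℂ := z - P with hw_def
  have hwim : w.im = z.im := by
    rw [hw_def, Complex.sub_im, hP_def]
    simp [Complex.mul_im]
  have hwre : w.re = z.re - Real.pi * n := by
    rw [hw_def, Complex.sub_re, hP_def]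
    simp [Complex.mul_re]
  have hsinz_eq : Complex.sin z = (-1 : ℂ)^n * Complex.sin w := by
    have hzw : z = (Real.pi : ℂ) * n + w := by rw [hw_def, hP_def]; ring
    rw [hzw, sin_shift]
  have habs_sin_w : Complex.abs (Complex.sin w) ≤ D / (n:ℝ) := by
    have h1 : Complex.abs z * Complex.abs (Complex.sin z) = Complex.abs Iv := by
      rw [← map_mul, hzsin]
    have h2 : Complex.abs (Complex.sin z) = Complex.abs (Complex.sin w) := by
      rw [hsinz_eq, map_mul]
      simp [map_pow]
    rw [h2] at h1
    rw [le_div_iff₀ hν]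
    calc Complex.abs (Complex.sin w) * n ≤ Complex.abs (Complex.sin w) * Complex.abs z :=
          mul_le_mul_of_nonneg_left hzabs (Complex.abs.nonneg _)
      _ = Complex.abs Iv := by rw [← h1]; ring
      _ ≤ D := hIvD
  have hw_rebound : |w.re| ≤ Real.pi / 2 := by rw [hwre]; exact hzre
  have hwW : Complex.abs w ≤ W / (n:ℝ) := by
    have h1 := sin_lower w hw_rebound
    have h1' : Complex.abs w ≤ Real.pi / 2 * Complex.abs (Complex.sin w) := by
      have hx := mul_le_mul_of_nonneg_left h1 (le_of_lt (by positivity : (0:ℝ) < Real.pi / 2))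
      calc Complex.abs w = Real.pi / 2 * (2 / Real.pi * Complex.abs w) := by field_simp
        _ ≤ _ := hx
    have h2 : Complex.abs (Complex.sin w) * (n:ℝ) ≤ D := (le_div_iff₀ hν).1 habs_sin_w
    rw [le_div_iff₀ hν, hW_def]
    calc Complex.abs w * (n:ℝ) ≤ Real.pi / 2 * Complex.abs (Complex.sin w) * (n:ℝ) :=
          mul_le_mul_of_nonneg_right h1' hν.le
      _ = Real.pi / 2 * (Complex.abs (Complex.sin w) * (n:ℝ)) := by ring
      _ ≤ Real.pi / 2 * D := mul_le_mul_of_nonneg_left h2 (by positivity)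
      _ ≤ 2 * D := mul_le_mul_of_nonneg_right (by linarith) hD0.le
  have hw1 : Complex.abs w ≤ 1 := by
    refine le_trans hwW ?_
    rw [div_le_one hν]
    linarith
  -- Step B : φ is close to Φ
  set Φ : ℝ → ℂ := fun x => Complex.cos (((Real.pi * n * x : ℝ)) : ℂ) with hΦ_def
  have hΦabs : ∀ x : ℝ, Complex.abs (Φ x) ≤ 1 := by
    intro x
    rw [hΦ_def]
    simp only [← Complex.ofReal_cos, Complex.abs_ofReal]
    exact Real.abs_cos_le_one _
  have habs_cosd : ∀ r : ℝ, 0 ≤ r → r ≤ 1 →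
      Complex.abs (Complex.cos (z * (r:ℂ)) - Complex.cos (((Real.pi * n * r : ℝ)) : ℂ))
        ≤ Complex.abs w * E := by
    intro r h0 h1
    have ha : |(z * (r:ℂ)).im| ≤ b + 1 := by
      have him : (z * (r:ℂ)).im = z.im * r := by simp [Complex.mul_im]
      rw [him, abs_mul]
      calc |z.im| * |r| ≤ b * 1 := mul_le_mul hzim (by rwa [abs_of_nonneg h0]) (abs_nonneg _) hb0
        _ ≤ b + 1 := by linarith
    have hb' : |((((Real.pi * n * r : ℝ)) : ℂ)).im| ≤ b + 1 := by
      simp only [Complex.ofReal_im]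
      rw [abs_zero]; linarith
    have h := abs_cos_sub_cos (z * (r:ℂ)) (((Real.pi * n * r : ℝ)) : ℂ) ha hb'
    have harg : z * (r:ℂ) - (((Real.pi * n * r : ℝ)) : ℂ) = w * (r:ℂ) := by
      rw [hw_def, hP_def]; push_cast; ring
    rw [harg] at h
    refine le_trans h ?_
    rw [hE_def, map_mul]
    refine mul_le_mul_of_nonneg_right ?_ (Real.exp_pos _).le
    calc Complex.abs w * Complex.abs ((r:ℂ)) ≤ Complex.abs w * 1 := by
          refine mul_le_mul_of_nonneg_left ?_ (Complex.abs.nonneg w)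
          rw [Complex.abs_ofReal, abs_of_nonneg h0]; exact h1
      _ = Complex.abs w := mul_one _
  have hKMED : K * M * E ≤ D := by
    have hprod : 0 ≤ K * E * (2 * E - M) :=
      mul_nonneg (mul_nonneg hK hE0.le) (sub_nonneg.2 hM2)
    have hring : K * E * (2 * E - M) = 2 * K * E ^ 2 - K * M * E := by ring
    rw [hD_def]; linarith
  have hzinv : (Complex.abs z)⁻¹ ≤ ((n:ℝ))⁻¹ := by
    exact inv_anti₀ hν hzabs
  have hφΦ : ∀ x ∈ Set.Icc (0:ℝ) 1, Complex.abs (φ x - Φ x) ≤ C₁ / (n:ℝ) := by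
    intro x hx
    rw [hVolt x hx]
    have hsplit : Complex.cos (z * x) +
          z⁻¹ * (∫ t in (0:ℝ)..x, Bop V Q α β φ t * Complex.sin (z * ((x:ℂ) - (t:ℂ)))) - Φ x
        = (Complex.cos (z * x) - Φ x) +
          z⁻¹ * (∫ t in (0:ℝ)..x, Bop V Q α β φ t * Complex.sin (z * ((x:ℂ) - (t:ℂ)))) := by
      ring
    rw [hsplit]
    refine le_trans (Complex.abs.add_le _ _) ?_
    have h1 : Complex.abs (Complex.cos (z * x) - Φ x) ≤ Complex.abs w * E :=
      habs_cosd x hx.1 hx.2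
    have h2 : Complex.abs (z⁻¹ *
        (∫ t in (0:ℝ)..x, Bop V Q α β φ t * Complex.sin (z * ((x:ℂ) - (t:ℂ)))))
        ≤ ((n:ℝ))⁻¹ * D := by
      rw [map_mul, map_inv₀]
      exact mul_le_mul hzinv (le_trans (hVoltInt x hx) hKMED)
        (Complex.abs.nonneg _) (inv_nonneg.2 hν.le)
    have h3 : Complex.abs w * E ≤ W / n * E :=
      mul_le_mul_of_nonneg_right hwW hE0.le
    have h4 : ((n:ℝ))⁻¹ * D = D / n := by rw [inv_mul_eq_div]
    rw [hC₁_def]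
    have : W / n * E + D / n = (W * E + D) / n := by ring
    linarith [h1, h2, h3]
  -- Step C : measurability and integrability
  have hextφ_meas : AEMeasurable (ext01 φ) (volume : Measure ℝ) := by
    rw [show ext01 φ = Set.indicator (Set.Ioo 0 1) φ from rfl]
    exact (aemeasurable_indicator_iff measurableSet_Ioo).2
      ((hφcont.mono Set.Ioo_subset_Icc_self).aemeasurable measurableSet_Ioo)
  have hshift : ∀ (g : ℝ → ℂ), AEMeasurable g (volume : Measure ℝ) → ∀ c : ℝ,
      AEMeasurable (fun t : ℝ => g (t + c)) (volume : Measure ℝ) := by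
    intro g hg c
    exact hg.comp_quasiMeasurePreserving
      (measurePreserving_add_right volume c).quasiMeasurePreserving
  have hΦcont : Continuous Φ := by
    rw [hΦ_def]
    fun_prop
  have hextΦ_meas : AEMeasurable (ext01 Φ) (volume : Measure ℝ) :=
    ((hΦcont.measurable).indicator measurableSet_Ioo).aemeasurable
  have hBop_meas : ∀ u : ℝ → ℂ, AEMeasurable (ext01 u) (volume : Measure ℝ) →
      AEMeasurable (Bop V Q α β u) (volume : Measure ℝ) := by
    intro u hu
    have h1 : AEMeasurable (fun t : ℝ => ext01 u (t + α)) volume := hshift _ hu α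
    have h2 : AEMeasurable (fun t : ℝ => ext01 u (t - β)) volume := by
      have h3 := hshift _ hu (-β)
      have h4 : (fun t : ℝ => ext01 u (t - β)) = fun t : ℝ => ext01 u (t + (-β)) := by
        funext t; rw [sub_eq_add_neg]
      rw [h4]; exact h3
    exact (hVmeas.aemeasurable.mul h1).add (hQmeas.aemeasurable.mul h2)
  have hg_int : ∀ (u : ℝ → ℂ) (g : ℝ → ℂ) (c : ℝ), 0 ≤ c →
      AEMeasurable (ext01 u) (volume : Measure ℝ) → Continuous g →
      (∀ᵐ t ∂(volume : Measure ℝ), t ∈ Set.Ioo (0:ℝ) 1 →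
        Complex.abs (Bop V Q α β u t * g t) ≤ c) →
      IntervalIntegrable (fun t => Bop V Q α β u t * g t) volume 0 1 := by
    intro u g c hc hu hg hb
    rw [intervalIntegrable_iff, Set.uIoc_of_le zero_le_one]
    refine Integrable.mono' (integrable_const c)
      (((hBop_meas u hu).mul hg.aemeasurable).restrict).aestronglyMeasurable ?_
    filter_upwards [ae_restrict_mem measurableSet_Ioc, ae_restrict_of_ae hb,
      ae_restrict_of_ae hne1] with t ht h2 h3
    have htmem : t ∈ Set.Ioo (0:ℝ) 1 := ⟨ht.1, lt_of_le_of_ne ht.2 h3⟩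
    simpa [Complex.norm_eq_abs] using h2 htmem
  have hΦIoo : ∀ x ∈ Set.Ioo (0:ℝ) 1, Complex.abs (Φ x) ≤ 1 := fun x _ => hΦabs x
  have hb1 : ∀ᵐ t ∂(volume : Measure ℝ), t ∈ Set.Ioo (0:ℝ) 1 →
      Complex.abs (Bop V Q α β φ t * Complex.cos (z * (1 - (t:ℂ)))) ≤ K * M * E := by
    filter_upwards [hBop_ae φ M hM0 hφM'] with t hB ht
    rw [map_mul]
    have hcast : (1 - (t:ℂ)) = ((1 - t : ℝ) : ℂ) := by push_cast; ring
    have hcos : Complex.abs (Complex.cos (z * (1 - (t:ℂ)))) ≤ E := by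
      rw [hcast]
      exact hcosE (1 - t) (by rw [abs_le]; constructor <;> linarith [ht.1, ht.2])
    exact mul_le_mul (hB ht) hcos (Complex.abs.nonneg _) (mul_nonneg hK hM0)
  have hb2 : ∀ᵐ t ∂(volume : Measure ℝ), t ∈ Set.Ioo (0:ℝ) 1 →
      Complex.abs (Bop V Q α β Φ t * Complex.cos (((Real.pi * n * (1 - t) : ℝ)) : ℂ)) ≤ K * 1 := by
    filter_upwards [hBop_ae Φ 1 zero_le_one hΦIoo] with t hB ht
    rw [map_mul]
    have hcos : Complex.abs (Complex.cos (((Real.pi * n * (1 - t) : ℝ)) : ℂ)) ≤ 1 := by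
      rw [← Complex.ofReal_cos, Complex.abs_ofReal]
      exact Real.abs_cos_le_one _
    calc Complex.abs (Bop V Q α β Φ t) *
          Complex.abs (Complex.cos (((Real.pi * n * (1 - t) : ℝ)) : ℂ))
        ≤ (K * 1) * 1 := mul_le_mul (hB ht) hcos (Complex.abs.nonneg _)
            (mul_nonneg hK zero_le_one)
      _ = K * 1 := by ring
  have hg1_int : IntervalIntegrable
      (fun t => Bop V Q α β φ t * Complex.cos (z * (1 - (t:ℂ)))) volume 0 1 :=
    hg_int φ _ (K * M * E) hKME hextφ_meas (by fun_prop) hb1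
  have hg2_int : IntervalIntegrable
      (fun t => Bop V Q α β Φ t * Complex.cos (((Real.pi * n * (1 - t) : ℝ)) : ℂ)) volume 0 1 :=
    hg_int Φ _ (K * 1) (by linarith) hextΦ_meas (by fun_prop) hb2
  have hBsub : ∀ t : ℝ, Bop V Q α β φ t - Bop V Q α β Φ t
      = Bop V Q α β (fun x => φ x - Φ x) t := by
    intro t
    simp only [Bop, ext01, Set.indicator_apply]
    split_ifs <;> ring
  have hφΦIoo : ∀ x ∈ Set.Ioo (0:ℝ) 1, Complex.abs (φ x - Φ x) ≤ C₁ / (n:ℝ) :=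
    fun x hx => hφΦ x (Set.Ioo_subset_Icc_self hx)
  have hC₁n0 : 0 ≤ C₁ / (n:ℝ) := div_nonneg hC₁0.le hν.le
  have hIF : Complex.abs (Iv - fZero V Q α β n) ≤ C₂ / (n:ℝ) := by
    have hf0 : fZero V Q α β n =
        ∫ t in (0:ℝ)..1, Bop V Q α β Φ t * Complex.cos (((Real.pi * n * (1 - t) : ℝ)) : ℂ) := rfl
    rw [hIv_def, hf0, ← intervalIntegral.integral_sub hg1_int hg2_int]
    have hae : ∀ᵐ t ∂(volume : Measure ℝ), t ∈ Set.Ioo (0:ℝ) 1 →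
        Complex.abs (Bop V Q α β φ t * Complex.cos (z * (1 - (t:ℂ))) -
          Bop V Q α β Φ t * Complex.cos (((Real.pi * n * (1 - t) : ℝ)) : ℂ)) ≤ C₂ / (n:ℝ) := by
      filter_upwards [hBop_ae (fun x => φ x - Φ x) (C₁ / (n:ℝ)) hC₁n0 hφΦIoo,
        hBop_ae Φ 1 zero_le_one hΦIoo] with t h1 h2 ht
      have hsplit : Bop V Q α β φ t * Complex.cos (z * (1 - (t:ℂ))) -
            Bop V Q α β Φ t * Complex.cos (((Real.pi * n * (1 - t) : ℝ)) : ℂ)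
          = (Bop V Q α β φ t - Bop V Q α β Φ t) * Complex.cos (z * (1 - (t:ℂ)))
            + Bop V Q α β Φ t * (Complex.cos (z * (1 - (t:ℂ))) -
              Complex.cos (((Real.pi * n * (1 - t) : ℝ)) : ℂ)) := by ring
      rw [hsplit]
      refine le_trans (Complex.abs.add_le _ _) ?_
      rw [map_mul, map_mul]
      have hA : Complex.abs (Bop V Q α β φ t - Bop V Q α β Φ t) ≤ K * (C₁ / (n:ℝ)) := by
        rw [hBsub t]; exact h1 ht
      have hcastz : z * (1 - (t:ℂ)) = z * (((1 - t : ℝ)) : ℂ) := by push_cast; ring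
      have hcosz : Complex.abs (Complex.cos (z * (1 - (t:ℂ)))) ≤ E := by
        rw [hcastz]
        exact hcosE (1 - t) (by rw [abs_le]; constructor <;> linarith [ht.1, ht.2])
      have hcosd : Complex.abs (Complex.cos (z * (1 - (t:ℂ))) -
          Complex.cos (((Real.pi * n * (1 - t) : ℝ)) : ℂ)) ≤ Complex.abs w * E := by
        rw [hcastz]
        exact habs_cosd (1 - t) (by linarith [ht.2]) (by linarith [ht.1])
      have hT1 : Complex.abs (Bop V Q α β φ t - Bop V Q α β Φ t) *
          Complex.abs (Complex.cos (z * (1 - (t:ℂ)))) ≤ K * (C₁ / (n:ℝ)) * E :=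
        mul_le_mul hA hcosz (Complex.abs.nonneg _) (mul_nonneg hK hC₁n0)
      have hT2 : Complex.abs (Bop V Q α β Φ t) *
          Complex.abs (Complex.cos (z * (1 - (t:ℂ))) -
            Complex.cos (((Real.pi * n * (1 - t) : ℝ)) : ℂ)) ≤ (K * 1) * (W / (n:ℝ) * E) := by
        refine mul_le_mul (h2 ht) (le_trans hcosd ?_) (Complex.abs.nonneg _)
          (mul_nonneg hK zero_le_one)
        exact mul_le_mul_of_nonneg_right hwW hE0.le
      have hsum : K * (C₁ / (n:ℝ)) * E + (K * 1) * (W / (n:ℝ) * E) = C₂ / (n:ℝ) := by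
        rw [hC₂_def]; field_simp
      linarith [hT1, hT2]
    have h := int_bound _ (C₂ / (n:ℝ)) 1 (div_nonneg hC₂0 hν.le)
      (Set.mem_Icc.2 ⟨zero_le_one, le_refl 1⟩) hae
    simpa using h
  -- final assembly
  set F : ℂ := fZero V Q α β n with hF_def
  set σ : ℂ := (-1 : ℂ) ^ n with hσ_def
  have hσabs : Complex.abs σ = 1 := by rw [hσ_def]; simp
  have hσ2 : σ * σ = 1 := by
    rw [hσ_def, ← pow_add, ← two_mul, pow_mul]
    norm_num
  have hsinw : Complex.sin w = σ * Iv / z := by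
    have h1 : z * (σ * Complex.sin w) = Iv := by rw [← hsinz_eq]; exact hzsin
    rw [eq_div_iff hz0]
    calc Complex.sin w * z = σ * σ * Complex.sin w * z := by rw [hσ2]; ring
      _ = σ * (z * (σ * Complex.sin w)) := by ring
      _ = σ * Iv := by rw [h1]
  have hkey : z - P - σ * F / P
      = (w - Complex.sin w) + (σ * Iv / z - σ * Iv / P) + σ * (Iv - F) / P := by
    rw [hsinw, hw_def]
    field_simp
    ring
  have hwE : Real.exp |w.im| ≤ E := by
    rw [hwim, hE_def]
    apply Real.exp_le_exp.2
    calc |z.im| ≤ b := hzim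
      _ ≤ 2 * (b + 1) := by linarith
  have hWn0 : 0 ≤ W / (n:ℝ) := div_nonneg hW0.le hν.le
  have hT1 : Complex.abs (w - Complex.sin w) ≤ W ^ 2 * E / (n:ℝ) ^ 2 := by
    have heq : Complex.abs (w - Complex.sin w) = Complex.abs (Complex.sin w - w) := by
      rw [← Complex.abs.map_neg]; ring_nf
    rw [heq]
    refine le_trans (abs_sin_sub_self w) ?_
    have h3 : Complex.abs w ^ 3 ≤ (W / (n:ℝ)) ^ 2 := by
      calc Complex.abs w ^ 3 = Complex.abs w * Complex.abs w * Complex.abs w := by ring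
        _ ≤ (W / (n:ℝ)) * (W / (n:ℝ)) * 1 :=
            mul_le_mul (mul_le_mul hwW hwW (Complex.abs.nonneg _) hWn0) hw1
              (Complex.abs.nonneg _) (mul_nonneg hWn0 hWn0)
        _ = (W / (n:ℝ)) ^ 2 := by ring
    calc Complex.abs w ^ 3 * Real.exp |w.im| ≤ (W / (n:ℝ)) ^ 2 * E :=
          mul_le_mul h3 hwE (Real.exp_pos _).le (by positivity)
      _ = W ^ 2 * E / (n:ℝ) ^ 2 := by rw [div_pow]; ring
  have hT2 : Complex.abs (σ * Iv / z - σ * Iv / P) ≤ D * W / (n:ℝ) ^ 2 := by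
    have heq : σ * Iv / z - σ * Iv / P = σ * Iv * (P - z) / (z * P) := by
      field_simp
    have hPz : P - z = -w := by rw [hw_def]; ring
    rw [heq, hPz, map_div₀, map_mul, map_mul, Complex.abs.map_neg, map_mul]
    have hnum : Complex.abs σ * Complex.abs Iv * Complex.abs w ≤ D * (W / (n:ℝ)) := by
      rw [hσabs, one_mul]
      exact mul_le_mul hIvD hwW (Complex.abs.nonneg _) hD0.le
    have hden : (n:ℝ) * (n:ℝ) ≤ Complex.abs z * Complex.abs P :=
      mul_le_mul hzabs hPn hν.le (Complex.abs.nonneg _)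
    calc Complex.abs σ * Complex.abs Iv * Complex.abs w / (Complex.abs z * Complex.abs P)
        ≤ D * (W / (n:ℝ)) / ((n:ℝ) * (n:ℝ)) := by
          refine div_le_div₀ (mul_nonneg hD0.le hWn0) hnum (mul_pos hν hν) hden
      _ = D * W / ((n:ℝ) ^ 2 * (n:ℝ)) := by
          rw [mul_div_assoc', div_div]
          congr 1
          ring
      _ ≤ D * W / (n:ℝ) ^ 2 := by
          refine div_le_div_of_nonneg_left (mul_nonneg hD0.le hW0.le) (pow_pos hν 2) ?_
          calc ((n:ℝ)) ^ 2 = (n:ℝ) ^ 2 * 1 := by ring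
            _ ≤ (n:ℝ) ^ 2 * (n:ℝ) := mul_le_mul_of_nonneg_left hn1' (sq_nonneg _)
  have hT3 : Complex.abs (σ * (Iv - F) / P) ≤ C₂ / (n:ℝ) ^ 2 := by
    rw [map_div₀, map_mul, hσabs, one_mul]
    calc Complex.abs (Iv - F) / Complex.abs P ≤ (C₂ / (n:ℝ)) / (n:ℝ) :=
          div_le_div₀ (div_nonneg hC₂0 hν.le) hIF hν hPn
      _ = C₂ / (n:ℝ) ^ 2 := by rw [div_div, ← sq]
  have hfinal : Complex.abs (z - P - σ * F / P) ≤ C / (n:ℝ) ^ 2 := by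
    rw [hkey]
    refine le_trans (Complex.abs.add_le _ _) ?_
    refine le_trans (add_le_add_left (Complex.abs.add_le _ _) _) ?_
    have hsum := add_le_add (add_le_add hT1 hT2) hT3
    refine le_trans hsum ?_
    have heq : W ^ 2 * E / (n:ℝ) ^ 2 + D * W / (n:ℝ) ^ 2 + C₂ / (n:ℝ) ^ 2
        = (W ^ 2 * E + D * W + C₂) / (n:ℝ) ^ 2 := by ring
    rw [heq, hC_def]
    refine div_le_div_of_nonneg_right ?_ (pow_pos hν 2).le
    linarith
  exact hfinal
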